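/- arXiv:1912.10968 — 8 statements merged into one kernel-verified Lean document; each statement's English description precedes it below -/
import Mathlib

section
/- Let A be a commutative ring, I ⊆ A a finitely generated ideal, and M a derived I-complete A-module. Then the following are equivalent: (1) for every t ∈ I, the localization M[1/t] is the zero module (equivalently, every element of M is annihilated by a power of t for each t ∈ I); (2) there exists r ≥ 1 such that I^r · M = 0; (3) there exists r ≥ 1 such that for all n ≥ 1, I^r · (M/I^n M) = 0 (equivalently, I^r M ⊆ I^n M for all n). -/
/-!
For a single `x`, derived `x`-completeness makes `x`-power torsion bounded. If
`x ^ c • M ⊆ x ^ (c + 1) • M` for some `c`, every element of `x ^ c • M` starts an infinite chain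
`u₀ = x • u₁ = x² • u₂ = ⋯`, which lies in the kernel of `Φ_x`, so `x ^ c • M = 0`. Otherwise pick
witnesses `y_c` with `x ^ c • y_c ∉ x ^ (c + 1) • M`; surjectivity of `Φ_x` produces an element
`m₀ = ∑ x ^ k • y_{e_k}` for a sparse sequence `e_k`, and killing `m₀` by its torsion exponent
isolates one term `x ^ e • y_e` inside `x ^ (e + 1) • M`. Since `I` is finitely generated, this
gives `(1) ⇒ (2)` through the radical of the annihilator.

For `(3) ⇒ (2)`, the submodule `P = I ^ r • M` satisfies `P ⊆ I • P`, and a derived Nakayama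
lemma shows `P = 0`. Write `I = (g) + J` with `J` generated by fewer elements and let `Q` be the
set of elements of `M` whose class in `M ⧸ P` lifts to `lim (⋯ →g M ⧸ P →g M ⧸ P)`. Expanding
defects along the generators of `J` and solving `Φ_g`-equations coefficientwise gives
`P ⊆ J • Q` and `Q ⊆ J • Q`, so `Q = 0` by induction and hence `P = 0`.
-/

/-- `Φ_x(M) : (∏ ℕ, M) → (∏ ℕ, M)`, `(m_n)_n ↦ (m_n − x • m_{n+1})_n`. -/
def derivedCompletionPhi {A : Type*} [CommRing A] (x : A) (M : Type*) [AddCommGroup M]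
    [Module A M] : (ℕ → M) → (ℕ → M) :=
  fun m n => m n - x • m (n + 1)

/-- A module `M` is derived `x`-complete if `Φ_x(M)` is bijective. -/
def IsDerivedComplete {A : Type*} [CommRing A] (x : A) (M : Type*) [AddCommGroup M]
    [Module A M] : Prop :=
  Function.Bijective (derivedCompletionPhi x M)

section DerivedComplete

variable {A : Type*} [CommRing A] {M : Type*} [AddCommGroup M] [Module A M]

theorem derivedCompletionPhi_apply (x : A) (m : ℕ → M) (n : ℕ) :
    derivedCompletionPhi x M m n = m n - x • m (n + 1) :=
  rfl

theorem pow_smul_eq_zero_of_le {R N : Type*} [Monoid R] [AddMonoid N] [DistribMulAction R N]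
    {x : R} {m : N} {k n : ℕ} (hkn : k ≤ n) (hk : x ^ k • m = 0) :
    x ^ n • m = 0 := by
  rw [← Nat.sub_add_cancel hkn, pow_add, mul_smul, hk, smul_zero]

theorem eq_sum_pow_smul_derivedCompletionPhi_add (x : A) (m : ℕ → M) (K : ℕ) :
    m 0 = ∑ k ∈ Finset.range K, x ^ k • derivedCompletionPhi x M m k + x ^ K • m K := by
  induction K with
  | zero => simp
  | succ K ih =>
    rw [ih, Finset.sum_range_succ, derivedCompletionPhi_apply, smul_sub, pow_succ, mul_smul]
    abel

theorem eq_zero_of_forall_eq_smul_succ {x : A}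
    (hx : Function.Injective (derivedCompletionPhi x M)) {u : ℕ → M}
    (hu : ∀ n, u n = x • u (n + 1)) : u = 0 :=
  hx <| funext fun n => by simp [derivedCompletionPhi_apply, ← hu n]

theorem pow_smul_eq_zero_of_forall_pow_smul_eq_pow_succ_smul {x : A}
    (hx : Function.Injective (derivedCompletionPhi x M)) {c : ℕ} (h : ∀ m : M, ∃ m', x ^ c • m = x ^ (c + 1) • m')
    (m : M) : x ^ c • m = 0 := by
  choose next hnext using h
  have hchain : ∀ n, x ^ c • next^[n] m = x • x ^ c • next^[n + 1] m := fun n => by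
    rw [Function.iterate_succ_apply', hnext, pow_succ', mul_smul]
  simpa using congrFun (eq_zero_of_forall_eq_smul_succ hx hchain) 0

theorem exists_forall_pow_smul_eq_pow_succ_smul {x : A}
    (hx : Function.Surjective (derivedCompletionPhi x M))
    (htor : ∀ m : M, ∃ k : ℕ, x ^ k • m = 0) :
    ∃ c : ℕ, ∀ m : M, ∃ m', x ^ c • m = x ^ (c + 1) • m' := by
  by_contra! h
  choose y hy using h
  choose t ht using fun c => htor (y c)
  -- `y (d k + k)` is placed at position `k`; `d` grows fast enough that multiplying by
  -- `x ^ d j` kills every earlier term.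
  let d : ℕ → ℕ := fun j => Nat.rec 0 (fun k dk => dk + t (dk + k) + 1) j
  have d_succ : ∀ k, d (k + 1) = d k + t (d k + k) + 1 := fun _ => rfl
  have d_mono : Monotone d := monotone_nat_of_le_succ fun k => by rw [d_succ]; omega
  have le_d : ∀ j, j ≤ d j := fun j => by
    induction j with
    | zero => exact le_rfl
    | succ j ih => rw [d_succ]; omega
  obtain ⟨m, hm⟩ := hx fun k => y (d k + k)
  obtain ⟨j, hj⟩ := htor (m 0)
  have hkill : x ^ d j • m 0 = 0 := pow_smul_eq_zero_of_le (le_d j) hj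
  have hearlier : ∀ k ∈ Finset.range j, x ^ d j • x ^ k • y (d k + k) = 0 := fun k hk => by
    have : d (k + 1) ≤ d j := d_mono (Finset.mem_range.mp hk)
    rw [smul_smul, ← pow_add]
    exact pow_smul_eq_zero_of_le (by rw [d_succ] at this; omega) (ht _)
  rw [eq_sum_pow_smul_derivedCompletionPhi_add x m (j + 1), hm, Finset.sum_range_succ,
    smul_add, smul_add, Finset.smul_sum, Finset.sum_eq_zero hearlier, zero_add,
    smul_smul, smul_smul, ← pow_add, ← pow_add, ← add_assoc] at hkill
  exact hy (d j + j) (-m (j + 1)) (by rw [smul_neg, eq_neg_iff_add_eq_zero]; exact hkill)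

theorem IsDerivedComplete.exists_forall_pow_smul_eq_zero {x : A} (hx : IsDerivedComplete x M)
    (htor : ∀ m : M, ∃ k : ℕ, x ^ k • m = 0) : ∃ c : ℕ, ∀ m : M, x ^ c • m = 0 :=
  let ⟨c, hc⟩ := exists_forall_pow_smul_eq_pow_succ_smul hx.2 htor
  ⟨c, pow_smul_eq_zero_of_forall_pow_smul_eq_pow_succ_smul hx.1 hc⟩

end DerivedComplete

section DerivedNakayama

variable {A : Type*} [CommRing A] {M : Type*} [AddCommGroup M] [Module A M]

/-- The elements of `M` whose class in `M ⧸ B` lifts to `lim (⋯ →g M ⧸ B →g M ⧸ B)`. -/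
def divisibleMod (g : A) (B : Submodule A M) : Submodule A M where
  carrier := {m | ∃ c : ℕ → M, c 0 = m ∧ ∀ n, c n - g • c (n + 1) ∈ B}
  add_mem' := by
    rintro _ _ ⟨c, rfl, hc⟩ ⟨d, rfl, hd⟩
    refine ⟨c + d, rfl, fun n => ?_⟩
    convert B.add_mem (hc n) (hd n) using 1
    simp only [Pi.add_apply, smul_add]
    abel
  zero_mem' := ⟨0, rfl, fun n => by simp⟩
  smul_mem' := by
    rintro a _ ⟨c, rfl, hc⟩
    refine ⟨a • c, rfl, fun n => ?_⟩
    convert B.smul_mem a (hc n) using 1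
    simp only [Pi.smul_apply, smul_sub, smul_comm a g]

theorem divisibleMod_mono {g : A} {B B' : Submodule A M} (h : B ≤ B') :
    divisibleMod g B ≤ divisibleMod g B' :=
  fun _ ⟨c, hc0, hc⟩ => ⟨c, hc0, fun n => h (hc n)⟩

theorem divisibleMod_divisibleMod_le (g : A) (B : Submodule A M) :
    divisibleMod g (divisibleMod g B) ≤ divisibleMod g B := by
  rintro _ ⟨c, rfl, hc⟩
  choose u hu0 hu using hc
  -- Correct `c n` by the diagonal sum of the chains `u k` witnessing its defects.
  refine ⟨fun n => c n + ∑ k ∈ Finset.range n, u k (n - k), by simp, fun n => ?_⟩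
  have hshift : ∑ k ∈ Finset.range (n + 1), u k (n + 1 - k)
      = ∑ k ∈ Finset.range n, u k (n - k + 1) + u n 1 := by
    rw [Finset.sum_range_succ, Nat.add_sub_cancel_left]
    exact congrArg (· + u n 1) (Finset.sum_congr rfl fun k hk => by
      rw [Nat.sub_add_comm (Finset.mem_range.mp hk).le])
  have hdefect : (c n + ∑ k ∈ Finset.range n, u k (n - k))
      - g • (c (n + 1) + ∑ k ∈ Finset.range (n + 1), u k (n + 1 - k))
      = (u n 0 - g • u n 1) + ∑ k ∈ Finset.range n, (u k (n - k) - g • u k (n - k + 1)) := by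
    rw [hshift, hu0 n]
    simp only [smul_add, Finset.sum_sub_distrib, Finset.smul_sum]
    abel
  rw [hdefect]
  exact B.add_mem (hu n 0) (Submodule.sum_mem _ fun k _ => hu k _)

theorem le_divisibleMod_of_forall_exists_sub_smul_mem {g : A} {P B : Submodule A M}
    (h : ∀ p ∈ P, ∃ p' ∈ P, p - g • p' ∈ B) : P ≤ divisibleMod g B := by
  choose next hnextP hnext using h
  let step : P → P := fun p => ⟨next p p.2, hnextP p p.2⟩
  intro p hp
  refine ⟨fun n => (step^[n] ⟨p, hp⟩ : M), rfl, fun n => ?_⟩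
  simp only [Function.iterate_succ_apply']
  exact hnext _ _

theorem exists_eq_sum_smul_of_mem_span_smul {s : Finset A} {B : Submodule A M} {x : M}
    (hx : x ∈ Ideal.span (s : Set A) • B) :
    ∃ γ : A → M, (∀ f, γ f ∈ B) ∧ x = ∑ f ∈ s, f • γ f := by
  induction hx using Submodule.smul_induction_on' with
  | smul a ha b hb =>
    obtain ⟨c, -, rfl⟩ := Submodule.mem_span_finset.mp ha
    refine ⟨fun f => c f • b, fun f => B.smul_mem _ hb, ?_⟩
    simp only [Finset.sum_smul, smul_smul, smul_eq_mul, mul_comm]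
  | add x _ y _ hx hy =>
    obtain ⟨γ, hγ, rfl⟩ := hx
    obtain ⟨δ, hδ, rfl⟩ := hy
    exact ⟨γ + δ, fun f => B.add_mem (hγ f) (hδ f), by
      simp [smul_add, Finset.sum_add_distrib]⟩

theorem IsDerivedComplete.divisibleMod_span_smul_le {g : A} (hg : IsDerivedComplete g M)
    (s : Finset A) (B : Submodule A M) :
    divisibleMod g (Ideal.span (s : Set A) • B) ≤ Ideal.span (s : Set A) • divisibleMod g B := by
  rintro _ ⟨c, rfl, hc⟩
  choose γ hγB hγ using fun n => exists_eq_sum_smul_of_mem_span_smul (hc n)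
  choose u hu using fun f => hg.2 fun n => γ n f
  have hu' : ∀ f n, u f n - g • u f (n + 1) = γ n f := fun f n => congrFun (hu f) n
  have hc_eq : c = fun n => ∑ f ∈ s, f • u f n := hg.1 <| funext fun n => by
    simp only [derivedCompletionPhi_apply, hγ n, Finset.smul_sum, ← Finset.sum_sub_distrib,
      ← hu', smul_sub, smul_comm g]
  rw [hc_eq]
  exact Submodule.sum_mem _ fun f hf =>
    Submodule.smul_mem_smul (Ideal.subset_span hf) ⟨u f, rfl, fun n => hu' f n ▸ hγB n f⟩

theorem eq_bot_of_le_span_smul_self {s : Finset A} (hs : ∀ f ∈ s, IsDerivedComplete f M)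
    {P : Submodule A M} (hP : P ≤ Ideal.span (s : Set A) • P) : P = ⊥ := by
  classical
  induction s using Finset.induction_on generalizing P with
  | empty => simpa using hP
  | @insert g s hgs ih =>
    have hg : IsDerivedComplete g M := hs g (Finset.mem_insert_self g s)
    set J : Ideal A := Ideal.span (s : Set A)
    have hstep : ∀ p ∈ P, ∃ p' ∈ P, p - g • p' ∈ J • P := fun p hp => by
      obtain ⟨γ, hγ, hsum⟩ := exists_eq_sum_smul_of_mem_span_smul (hP hp)
      refine ⟨γ g, hγ g, ?_⟩
      rw [hsum, Finset.sum_insert hgs, add_sub_cancel_left]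
      exact Submodule.sum_mem _ fun f hf => Submodule.smul_mem_smul (Ideal.subset_span hf) (hγ f)
    have hPQ : P ≤ J • divisibleMod g P :=
      (le_divisibleMod_of_forall_exists_sub_smul_mem hstep).trans
        (hg.divisibleMod_span_smul_le s P)
    have hQ : divisibleMod g P ≤ J • divisibleMod g P :=
      calc divisibleMod g P ≤ divisibleMod g (J • divisibleMod g P) := divisibleMod_mono hPQ
        _ ≤ J • divisibleMod g (divisibleMod g P) := hg.divisibleMod_span_smul_le s _
        _ ≤ J • divisibleMod g P := Submodule.smul_mono le_rfl (divisibleMod_divisibleMod_le g P)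
    have hQ_bot := ih (fun f hf => hs f (Finset.mem_insert_of_mem hf)) hQ
    rw [hQ_bot, Submodule.smul_bot] at hPQ
    exact le_bot_iff.mp hPQ

end DerivedNakayama

theorem subsingleton_localizedModule_powers_iff {A : Type*} [CommRing A] {M : Type*}
    [AddCommGroup M] [Module A M] {t : A} :
    Subsingleton (LocalizedModule (Submonoid.powers t) M) ↔ ∀ m : M, ∃ k : ℕ, t ^ k • m = 0 := by
  simp [LocalizedModule.subsingleton_iff, Submonoid.mem_powers_iff]

/-- Theorem 2.25 (Bhatt): for a derived `I`-complete module `M` over a commutative ring `A`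
with `I ⊆ A` finitely generated, the following are equivalent:
(1) `M[1/t] = 0` for all `t ∈ I`;
(2) there is `r ≥ 1` with `I^r • M = 0`;
(3) there is `r ≥ 1` such that `I^r • (M/I^n M) = 0` for all `n ≥ 1`. -/
theorem stmt1 {A : Type*} [CommRing A] (I : Ideal A) (hI : I.FG)
    (M : Type*) [AddCommGroup M] [Module A M]
    (hM : ∀ x ∈ I, IsDerivedComplete x M) :
    List.TFAE
      [ ∀ t ∈ I, Subsingleton (LocalizedModule (Submonoid.powers t) M),
        ∃ r : ℕ, 1 ≤ r ∧ ∀ a ∈ I ^ r, ∀ m : M, a • m = 0,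
        ∃ r : ℕ, 1 ≤ r ∧ ∀ n : ℕ, 1 ≤ n →
          ∀ a ∈ I ^ r, ∀ m : M, a • m ∈ (I ^ n • (⊤ : Submodule A M)) ] := by
  tfae_have 1 → 2 := by
    intro h
    have hrad : I ≤ (Module.annihilator A M).radical := fun t ht =>
      let ⟨c, hc⟩ := (hM t ht).exists_forall_pow_smul_eq_zero
        (subsingleton_localizedModule_powers_iff.mp (h t ht))
      ⟨c, Module.mem_annihilator.mpr hc⟩
    obtain ⟨n, hn⟩ := Ideal.exists_pow_le_of_le_radical_of_fg hrad hI
    exact ⟨n + 1, by omega, fun a ha =>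
      Module.mem_annihilator.mp (hn (Ideal.pow_le_pow_right n.le_succ ha))⟩
  tfae_have 2 → 1 := fun ⟨r, _, hr⟩ t ht =>
    subsingleton_localizedModule_powers_iff.mpr fun m => ⟨r, hr _ (Ideal.pow_mem_pow ht r) m⟩
  tfae_have 2 → 3 := fun ⟨r, hr1, hr⟩ =>
    ⟨r, hr1, fun _ _ a ha m => (hr a ha m).symm ▸ Submodule.zero_mem _⟩
  tfae_have 3 → 2 := by
    rintro ⟨r, hr1, hr⟩
    obtain ⟨s, rfl⟩ := hI
    have hP : (Ideal.span (s : Set A) ^ r • ⊤ : Submodule A M)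
        ≤ Ideal.span (s : Set A) • (Ideal.span (s : Set A) ^ r • ⊤) := by
      rw [← Submodule.smul_assoc, Ideal.smul_eq_mul, ← pow_succ']
      exact Submodule.smul_le.mpr fun a ha m _ => hr (r + 1) (by omega) a ha m
    have hP_bot := eq_bot_of_le_span_smul_self (fun f hf => hM f (Ideal.subset_span hf)) hP
    refine ⟨r, hr1, fun a ha m => ?_⟩
    simpa [hP_bot] using Submodule.smul_mem_smul ha (Submodule.mem_top (x := m))
  tfae_finish
end

section
/- Let A be a commutative ring and t ∈ A. Let M, N, P be A-modules with P derived t-complete, and let f : M → N and g : N → P be A-linear maps such that f is divisible by every power of t in Hom_A(M, N) (for every n there exists f_n with f = t^n · f_n) and g is divisible by every power of t in Hom_A(N, P). Then g ∘ f = 0. -/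
section

variable {A : Type*} [CommRing A] {N P : Type*} [AddCommGroup N] [Module A N]
  [AddCommGroup P] [Module A P]

theorem eq_zero_of_derivedCompletionPhi_injective {x : A}
    (hP : Function.Injective (derivedCompletionPhi x P)) {p : ℕ → P}
    (hp : ∀ n, p n = x • p (n + 1)) : p = 0 :=
  hP <| funext fun n => by simp [derivedCompletionPhi, ← hp n]

theorem LinearMap.apply_eq_zero_of_eq_smul_of_smul_eq_zero {g g' : N →ₗ[A] P} {a : A} {y : N}
    (hg : g = a • g') (hy : a • y = 0) : g y = 0 := by
  rw [hg, LinearMap.smul_apply, ← map_smul, hy, map_zero]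

theorem LinearMap.apply_eq_zero_of_forall_eq_pow_smul {t : A}
    (hP : Function.Injective (derivedCompletionPhi t P)) {g : N →ₗ[A] P}
    (hg : ∀ n : ℕ, ∃ gₙ : N →ₗ[A] P, g = t ^ n • gₙ) {y : N}
    (hy : ∀ n : ℕ, ∃ yₙ : N, y = t ^ n • yₙ) : g y = 0 := by
  choose Y hY using hy
  have htorsion : ∀ n, t ^ n • (Y n - t • Y (n + 1)) = 0 := fun n => by
    rw [smul_sub, smul_smul, ← pow_succ, ← hY, ← hY, sub_self]
  have hseq : ∀ n, g (Y n) = t • g (Y (n + 1)) := fun n => by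
    obtain ⟨gₙ, hgₙ⟩ := hg n
    rw [← map_smul, ← sub_eq_zero, ← map_sub]
    exact apply_eq_zero_of_eq_smul_of_smul_eq_zero hgₙ (htorsion n)
  rw [hY 0, pow_zero, one_smul]
  exact congrFun (eq_zero_of_derivedCompletionPhi_injective hP hseq) 0

end

/-- Lemma 2.24: if `P` is derived `t`-complete and `f : M → N`, `g : N → P` are both divisible
by all powers of `t` in the respective Hom-modules, then `g ∘ f = 0`. -/
theorem stmt3 {A : Type*} [CommRing A] (t : A)
    (M N P : Type*) [AddCommGroup M] [Module A M] [AddCommGroup N] [Module A N]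
    [AddCommGroup P] [Module A P]
    (hP : IsDerivedComplete t P)
    (f : M →ₗ[A] N) (g : N →ₗ[A] P)
    (hf : ∀ n : ℕ, ∃ fₙ : M →ₗ[A] N, f = t ^ n • fₙ)
    (hg : ∀ n : ℕ, ∃ gₙ : N →ₗ[A] P, g = t ^ n • gₙ) :
    g ∘ₗ f = 0 := by
  ext m
  refine g.apply_eq_zero_of_forall_eq_pow_smul hP.injective hg fun n => ?_
  obtain ⟨fₙ, hfₙ⟩ := hf n
  exact ⟨fₙ m, by rw [hfₙ, LinearMap.smul_apply]⟩
end

section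
/- Let A be a commutative ring and I ⊆ A an ideal. Suppose given a commutative diagram of A-modules with exact rows M₁ → M₂ → M₃ → M₄ → M₅ and N₁ → N₂ → N₃ → N₄ → N₅, with vertical maps f_i : M_i → N_i. If f₂ and f₅ are isomorphisms and f₄ is ≤I-surjective, then f₃ is ≤I-surjective. -/
/-!
The only input from `f₄` is membership in its range, so the statement is the special case
`y ↦ a • y` of a sharpened four lemma: when `f₂` is surjective and `f₅` injective, an element of
`N₃` lies in the range of `f₃` as soon as its image in `N₄` lies in the range of `f₄`. Indeed
`n₃ (a • y) = a • n₃ y` is in the range of `f₄` for every `a ∈ I`.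
-/

/-- A map of `A`-modules is `≤I`-surjective if its cokernel is annihilated by `I`,
equivalently `a • y ∈ range f` for all `a ∈ I` and all `y` in the target. -/
def IsLeqSurjective {A : Type*} [CommRing A] (I : Ideal A) {M N : Type*}
    [AddCommGroup M] [Module A M] [AddCommGroup N] [Module A N] (f : M →ₗ[A] N) : Prop :=
  ∀ a ∈ I, ∀ y : N, a • y ∈ LinearMap.range f

namespace LinearMap

variable {R : Type*} [Semiring R]
  {M₂ M₃ M₄ M₅ N₂ N₃ N₄ N₅ : Type*}
  [AddCommGroup M₂] [Module R M₂] [AddCommGroup M₃] [Module R M₃]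
  [AddCommGroup M₄] [Module R M₄] [AddCommGroup M₅] [Module R M₅]
  [AddCommGroup N₂] [Module R N₂] [AddCommGroup N₃] [Module R N₃]
  [AddCommGroup N₄] [Module R N₄] [AddCommGroup N₅] [Module R N₅]

lemma ker_le_range_of_exact_of_surjective {m₂ : M₂ →ₗ[R] M₃} {n₂ : N₂ →ₗ[R] N₃}
    {n₃ : N₃ →ₗ[R] N₄} {f₂ : M₂ →ₗ[R] N₂} {f₃ : M₃ →ₗ[R] N₃}
    (hN₂₃ : Function.Exact n₂ n₃) (hc₂ : f₃ ∘ₗ m₂ = n₂ ∘ₗ f₂)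
    (hf₂ : Function.Surjective f₂) :
    ker n₃ ≤ range f₃ := by
  intro y hy
  obtain ⟨w, rfl⟩ := (hN₂₃ y).mp hy
  obtain ⟨u, rfl⟩ := hf₂ w
  exact ⟨m₂ u, congr($hc₂ u)⟩

lemma comap_range_le_range_of_exact_of_injective {m₃ : M₃ →ₗ[R] M₄} {m₄ : M₄ →ₗ[R] M₅}
    {n₃ : N₃ →ₗ[R] N₄} {n₄ : N₄ →ₗ[R] N₅} {f₄ : M₄ →ₗ[R] N₄} {f₅ : M₅ →ₗ[R] N₅}
    (hM₃₄ : Function.Exact m₃ m₄) (hN₃₄ : Function.Exact n₃ n₄) (hc₄ : f₅ ∘ₗ m₄ = n₄ ∘ₗ f₄)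
    (hf₅ : Function.Injective f₅) :
    (range n₃).comap f₄ ≤ range m₃ := by
  rintro x ⟨y, hy⟩
  refine (hM₃₄ x).mp (hf₅ ?_)
  rw [map_zero, ← comp_apply, hc₄, comp_apply, ← hy, hN₃₄.apply_apply_eq_zero]

lemma comap_range_le_range_of_exact_of_surjective_of_injective
    {m₂ : M₂ →ₗ[R] M₃} {m₃ : M₃ →ₗ[R] M₄} {m₄ : M₄ →ₗ[R] M₅}
    {n₂ : N₂ →ₗ[R] N₃} {n₃ : N₃ →ₗ[R] N₄} {n₄ : N₄ →ₗ[R] N₅}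
    {f₂ : M₂ →ₗ[R] N₂} {f₃ : M₃ →ₗ[R] N₃} {f₄ : M₄ →ₗ[R] N₄} {f₅ : M₅ →ₗ[R] N₅}
    (hM₃₄ : Function.Exact m₃ m₄) (hN₂₃ : Function.Exact n₂ n₃) (hN₃₄ : Function.Exact n₃ n₄)
    (hc₂ : f₃ ∘ₗ m₂ = n₂ ∘ₗ f₂) (hc₃ : f₄ ∘ₗ m₃ = n₃ ∘ₗ f₃) (hc₄ : f₅ ∘ₗ m₄ = n₄ ∘ₗ f₄)
    (hf₂ : Function.Surjective f₂) (hf₅ : Function.Injective f₅) :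
    (range f₄).comap n₃ ≤ range f₃ := by
  rintro y ⟨x, hx⟩
  obtain ⟨z, rfl⟩ : x ∈ range m₃ :=
    comap_range_le_range_of_exact_of_injective hM₃₄ hN₃₄ hc₄ hf₅ ⟨y, hx.symm⟩
  have hker : y - f₃ z ∈ ker n₃ := by
    rw [mem_ker, map_sub, ← hx, ← comp_apply, hc₃, comp_apply, sub_self]
  simpa using add_mem (ker_le_range_of_exact_of_surjective hN₂₃ hc₂ hf₂ hker) (mem_range_self f₃ z)

end LinearMap

theorem stmt4_general {A : Type*} [CommRing A] (I : Ideal A)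
    {M₂ M₃ M₄ M₅ N₂ N₃ N₄ N₅ : Type*}
    [AddCommGroup M₂] [Module A M₂]
    [AddCommGroup M₃] [Module A M₃] [AddCommGroup M₄] [Module A M₄]
    [AddCommGroup M₅] [Module A M₅]
    [AddCommGroup N₂] [Module A N₂]
    [AddCommGroup N₃] [Module A N₃] [AddCommGroup N₄] [Module A N₄]
    [AddCommGroup N₅] [Module A N₅]
    (m₂ : M₂ →ₗ[A] M₃) (m₃ : M₃ →ₗ[A] M₄) (m₄ : M₄ →ₗ[A] M₅)
    (n₂ : N₂ →ₗ[A] N₃) (n₃ : N₃ →ₗ[A] N₄) (n₄ : N₄ →ₗ[A] N₅)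
    (f₂ : M₂ →ₗ[A] N₂) (f₃ : M₃ →ₗ[A] N₃) (f₄ : M₄ →ₗ[A] N₄)
    (f₅ : M₅ →ₗ[A] N₅)
    (hM₃₄ : Function.Exact m₃ m₄)
    (hN₂₃ : Function.Exact n₂ n₃)
    (hN₃₄ : Function.Exact n₃ n₄)
    (hc₂ : f₃ ∘ₗ m₂ = n₂ ∘ₗ f₂)
    (hc₃ : f₄ ∘ₗ m₃ = n₃ ∘ₗ f₃) (hc₄ : f₅ ∘ₗ m₄ = n₄ ∘ₗ f₄)
    (hf₂ : Function.Bijective f₂) (hf₅ : Function.Bijective f₅)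
    (hf₄ : IsLeqSurjective I f₄) :
    IsLeqSurjective I f₃ := by
  intro a ha y
  refine LinearMap.comap_range_le_range_of_exact_of_surjective_of_injective
    hM₃₄ hN₂₃ hN₃₄ hc₂ hc₃ hc₄ hf₂.surjective hf₅.injective ?_
  rw [Submodule.mem_comap, map_smul]
  exact hf₄ a ha (n₃ y)

/-- Lemma 2.15 (a variant of the five lemma): given a commutative diagram of `A`-modules with
exact rows `M₁ → M₂ → M₃ → M₄ → M₅`, `N₁ → N₂ → N₃ → N₄ → N₅`, if `f₂`, `f₅` are isomorphisms
and `f₄` is `≤I`-surjective, then `f₃` is `≤I`-surjective. -/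
theorem stmt4 {A : Type*} [CommRing A] (I : Ideal A)
    {M₁ M₂ M₃ M₄ M₅ N₁ N₂ N₃ N₄ N₅ : Type*}
    [AddCommGroup M₁] [Module A M₁] [AddCommGroup M₂] [Module A M₂]
    [AddCommGroup M₃] [Module A M₃] [AddCommGroup M₄] [Module A M₄]
    [AddCommGroup M₅] [Module A M₅]
    [AddCommGroup N₁] [Module A N₁] [AddCommGroup N₂] [Module A N₂]
    [AddCommGroup N₃] [Module A N₃] [AddCommGroup N₄] [Module A N₄]
    [AddCommGroup N₅] [Module A N₅]
    (m₁ : M₁ →ₗ[A] M₂) (m₂ : M₂ →ₗ[A] M₃) (m₃ : M₃ →ₗ[A] M₄) (m₄ : M₄ →ₗ[A] M₅)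
    (n₁ : N₁ →ₗ[A] N₂) (n₂ : N₂ →ₗ[A] N₃) (n₃ : N₃ →ₗ[A] N₄) (n₄ : N₄ →ₗ[A] N₅)
    (f₁ : M₁ →ₗ[A] N₁) (f₂ : M₂ →ₗ[A] N₂) (f₃ : M₃ →ₗ[A] N₃) (f₄ : M₄ →ₗ[A] N₄)
    (f₅ : M₅ →ₗ[A] N₅)
    (hM₁₂ : Function.Exact m₁ m₂) (hM₂₃ : Function.Exact m₂ m₃)
    (hM₃₄ : Function.Exact m₃ m₄)
    (hN₁₂ : Function.Exact n₁ n₂) (hN₂₃ : Function.Exact n₂ n₃)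
    (hN₃₄ : Function.Exact n₃ n₄)
    (hc₁ : f₂ ∘ₗ m₁ = n₁ ∘ₗ f₁) (hc₂ : f₃ ∘ₗ m₂ = n₂ ∘ₗ f₂)
    (hc₃ : f₄ ∘ₗ m₃ = n₃ ∘ₗ f₃) (hc₄ : f₅ ∘ₗ m₄ = n₄ ∘ₗ f₄)
    (hf₂ : Function.Bijective f₂) (hf₅ : Function.Bijective f₅)
    (hf₄ : IsLeqSurjective I f₄) :
    IsLeqSurjective I f₃ :=
  stmt4_general I m₂ m₃ m₄ n₂ n₃ n₄ f₂ f₃ f₄ f₅ hM₃₄ hN₂₃ hN₃₄ hc₂ hc₃ hc₄ hf₂ hf₅ hf₄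
end

section
/- Let A be a commutative ring, C an A-linear additive category, I ⊆ A a finitely generated ideal, and P a full subcategory of C closed under finite direct sums and retracts. Then for an object X of C the following are equivalent: (1) X belongs to P_{≤I}; (2) there exists a ≤I-split surjection X' → X with X' in P; (3) there exists a ≤I-split injection X → X'' with X'' in P. -/
/-!
Choose generators `a₁, …, aₙ` of `I` and, for each `i`, a factorization `aᵢ • 𝟙 X = fᵢ ≫ gᵢ`
through some `Xᵢ ∈ P`. On `X' = X₁ ⊞ ⋯ ⊞ Xₙ ∈ P` put `p = lift fᵢ` and `q = desc gᵢ`. The scalars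
`a` for which `a • 𝟙 X = p ≫ e ≫ q` for some endomorphism `e` of `X'` form an ideal containing
every `aᵢ` (take `e` the `i`-th projection of `X'`), hence all of `I`. So `q` is a `≤I`-split
surjection (sections `p ≫ e`) and `p` a `≤I`-split injection (retractions `e ≫ q`); conversely
either kind of map exhibits `X ∈ P_{≤I}` directly.
-/

open CategoryTheory CategoryTheory.Limits

universe v u w

/-- An object `X` belongs to `P_{≤I}` if for every `a ∈ I` there are `X₀ ∈ P` and maps
`f : X → X₀`, `g : X₀ → X` with `g ∘ f = a • id_X`. -/
def MemLeq {A : Type w} [CommRing A] {C : Type u} [Category.{v} C] [Preadditive C]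
    [CategoryTheory.Linear A C] (I : Ideal A) (P : Set C) (X : C) : Prop :=
  ∀ a ∈ I, ∃ X₀ ∈ P, ∃ (f : X ⟶ X₀) (g : X₀ ⟶ X), f ≫ g = a • 𝟙 X

section FactoringIdeal

open ZeroObject

variable (A : Type w) [CommRing A] {C : Type u} [Category.{v} C] [Preadditive C]
  [CategoryTheory.Linear A C]

def factoringIdeal {X Y : C} (p : X ⟶ Y) (q : Y ⟶ X) : Ideal A where
  carrier := {a | ∃ e : Y ⟶ Y, p ≫ e ≫ q = a • 𝟙 X}
  zero_mem' := ⟨0, by simp⟩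
  add_mem' := by
    rintro a b ⟨e, he⟩ ⟨e', he'⟩
    exact ⟨e + e', by simp [he, he', add_smul]⟩
  smul_mem' := by
    rintro c a ⟨e, he⟩
    exact ⟨c • e, by simp [he, smul_smul]⟩

variable {A}

lemma mem_factoringIdeal_of_comp_eq_smul {X Y : C} {p : X ⟶ Y} {q : Y ⟶ X} {a : A}
    (h : p ≫ q = a • 𝟙 X) : a ∈ factoringIdeal A p q :=
  ⟨𝟙 Y, by simpa using h⟩

lemma factoringIdeal_mono {X Y Y' : C} {p : X ⟶ Y} {q : Y ⟶ X} {p' : X ⟶ Y'} {q' : Y' ⟶ X}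
    (r : Y' ⟶ Y) (s : Y ⟶ Y') (hp : p' ≫ r = p) (hq : s ≫ q' = q) :
    factoringIdeal A p q ≤ factoringIdeal A p' q' := by
  rintro a ⟨e, he⟩
  exact ⟨r ≫ e ≫ s, by simp only [← Category.assoc, hp] at he ⊢; simpa [hq] using he⟩

lemma exists_span_le_factoringIdeal [HasZeroObject C] [HasBinaryBiproducts C] {P : Set C}
    (hzero : ∀ X : C, IsZero X → X ∈ P) (hsum : ∀ X Y : C, X ∈ P → Y ∈ P → (X ⊞ Y) ∈ P)
    {X : C} (s : Finset A)
    (hs : ∀ b ∈ s, ∃ X₀ ∈ P, ∃ (f : X ⟶ X₀) (g : X₀ ⟶ X), f ≫ g = b • 𝟙 X) :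
    ∃ X' ∈ P, ∃ (p : X ⟶ X') (q : X' ⟶ X), Ideal.span ↑s ≤ factoringIdeal A p q := by
  classical
  induction s using Finset.induction_on with
  | empty => exact ⟨0, hzero _ (isZero_zero C), 0, 0, by simp⟩
  | insert b t _ ih =>
    obtain ⟨X₀, hX₀, f, g, hfg⟩ := hs b (Finset.mem_insert_self b t)
    obtain ⟨X₁, hX₁, p, q, hle⟩ := ih fun c hc => hs c (Finset.mem_insert_of_mem hc)
    refine ⟨X₀ ⊞ X₁, hsum _ _ hX₀ hX₁, biprod.lift f p, biprod.desc g q, ?_⟩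
    rw [Finset.coe_insert, Ideal.span_insert, sup_le_iff, Ideal.span_singleton_le_iff_mem]
    constructor
    · exact factoringIdeal_mono biprod.fst biprod.inl (by simp) (by simp)
        (mem_factoringIdeal_of_comp_eq_smul hfg)
    · exact hle.trans (factoringIdeal_mono biprod.snd biprod.inr (by simp) (by simp))

lemma MemLeq.exists_le_factoringIdeal [HasZeroObject C] [HasBinaryBiproducts C] {I : Ideal A}
    {P : Set C} {X : C} (h : MemLeq I P X) (hI : I.FG)
    (hzero : ∀ X : C, IsZero X → X ∈ P) (hsum : ∀ X Y : C, X ∈ P → Y ∈ P → (X ⊞ Y) ∈ P) :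
    ∃ X' ∈ P, ∃ (p : X ⟶ X') (q : X' ⟶ X), I ≤ factoringIdeal A p q := by
  obtain ⟨s, rfl⟩ := hI
  exact exists_span_le_factoringIdeal hzero hsum s fun b hb => h b (Ideal.subset_span hb)

end FactoringIdeal

theorem stmt5_general {A : Type w} [CommRing A] {C : Type u} [Category.{v} C] [Preadditive C]
    [CategoryTheory.Linear A C] [HasFiniteBiproducts C] [HasBinaryBiproducts C]
    (I : Ideal A) (hI : I.FG) (P : Set C)
    (hzero : ∀ X : C, IsZero X → X ∈ P)
    (hsum : ∀ X Y : C, X ∈ P → Y ∈ P → (X ⊞ Y) ∈ P)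
    (X : C) :
    List.TFAE
      [ MemLeq I P X,
        ∃ X' ∈ P, ∃ f : X' ⟶ X, ∀ a ∈ I, ∃ g : X ⟶ X', g ≫ f = a • 𝟙 X,
        ∃ X'' ∈ P, ∃ f : X ⟶ X'', ∀ a ∈ I, ∃ g : X'' ⟶ X, f ≫ g = a • 𝟙 X ] := by
  tfae_have 1 → 2 := fun h => by
    obtain ⟨X', hX', p, q, hle⟩ := h.exists_le_factoringIdeal hI hzero hsum
    refine ⟨X', hX', q, fun a ha => ?_⟩
    obtain ⟨e, he⟩ := hle ha
    exact ⟨p ≫ e, by rw [Category.assoc, he]⟩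
  tfae_have 1 → 3 := fun h => by
    obtain ⟨X', hX', p, q, hle⟩ := h.exists_le_factoringIdeal hI hzero hsum
    refine ⟨X', hX', p, fun a ha => ?_⟩
    obtain ⟨e, he⟩ := hle ha
    exact ⟨e ≫ q, he⟩
  tfae_have 2 → 1 := by
    rintro ⟨X', hX', f, hf⟩ a ha
    obtain ⟨g, hg⟩ := hf a ha
    exact ⟨X', hX', g, f, hg⟩
  tfae_have 3 → 1 := by
    rintro ⟨X'', hX'', f, hf⟩ a ha
    obtain ⟨g, hg⟩ := hf a ha
    exact ⟨X'', hX'', f, g, hg⟩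
  tfae_finish

/-- Proposition 2.7: for a finitely generated ideal `I` and a full subcategory `P` of an
`A`-linear additive category `C` closed under finite direct sums and retracts, `X ∈ P_{≤I}`
iff there is a `≤I`-split surjection `X' → X` with `X' ∈ P` iff there is a `≤I`-split
injection `X → X''` with `X'' ∈ P`. -/
theorem stmt5 {A : Type w} [CommRing A] {C : Type u} [Category.{v} C] [Preadditive C]
    [CategoryTheory.Linear A C] [HasFiniteBiproducts C] [HasBinaryBiproducts C]
    (I : Ideal A) (hI : I.FG) (P : Set C)
    (hzero : ∀ X : C, IsZero X → X ∈ P)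
    (hsum : ∀ X Y : C, X ∈ P → Y ∈ P → (X ⊞ Y) ∈ P)
    (hretract : ∀ (X Y : C) (i : X ⟶ Y) (r : Y ⟶ X), i ≫ r = 𝟙 X → Y ∈ P → X ∈ P)
    (X : C) :
    List.TFAE
      [ MemLeq I P X,
        ∃ X' ∈ P, ∃ f : X' ⟶ X, ∀ a ∈ I, ∃ g : X ⟶ X', g ≫ f = a • 𝟙 X,
        ∃ X'' ∈ P, ∃ f : X ⟶ X'', ∀ a ∈ I, ∃ g : X'' ⟶ X, f ≫ g = a • 𝟙 X ] :=
  stmt5_general I hI P hzero hsum X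
end

section
/- Let A be a commutative ring, C an A-linear additive category, and I ⊆ A a finitely generated ideal. Suppose P is the union of a family of full subcategories P_α of C, each closed under finite direct sums and retracts, which is filtered in the sense that any two P_α, P_β are contained in a third. Then P_{≤I} is the union of the subcategories (P_α)_{≤I}. -/
/-!
The set of `a ∈ A` for which `a • 𝟙 X` factors through an object of a subcategory closed under
binary direct sums is closed under addition (factor through `X₀ ⊞ Y₀`) and under multiplication by
`A`, so it is an ideal as soon as it contains `0`. Hence it suffices to find a single `P_α` through
which `a • 𝟙 X` factors for `0` and for each of the finitely many generators of `I`; such an `α`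
exists because the family is filtered.
-/

open CategoryTheory CategoryTheory.Limits

universe v u w t

section

variable {A : Type w} [CommRing A] {C : Type u} [Category.{v} C] [Preadditive C]
  [CategoryTheory.Linear A C]

def SmulIdFactorsThrough (P : Set C) (X : C) (a : A) : Prop :=
  ∃ X₀ ∈ P, ∃ (f : X ⟶ X₀) (g : X₀ ⟶ X), f ≫ g = a • 𝟙 X

theorem memLeq_iff_forall_smulIdFactorsThrough (I : Ideal A) (P : Set C) (X : C) :
    MemLeq I P X ↔ ∀ a ∈ I, SmulIdFactorsThrough P X a :=
  Iff.rfl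

theorem SmulIdFactorsThrough.mono {P Q : Set C} (hPQ : P ⊆ Q) {X : C} {a : A}
    (h : SmulIdFactorsThrough P X a) : SmulIdFactorsThrough Q X a :=
  let ⟨X₀, hX₀, f, g, hfg⟩ := h
  ⟨X₀, hPQ hX₀, f, g, hfg⟩

theorem smulIdFactorsThrough_iUnion {ι : Type t} (P : ι → Set C) (X : C) (a : A) :
    SmulIdFactorsThrough (⋃ i, P i) X a ↔ ∃ i, SmulIdFactorsThrough (P i) X a := by
  simp only [SmulIdFactorsThrough, Set.mem_iUnion]
  exact ⟨fun ⟨X₀, ⟨i, hi⟩, hf⟩ => ⟨i, X₀, hi, hf⟩, fun ⟨i, X₀, hi, hf⟩ => ⟨X₀, ⟨i, hi⟩, hf⟩⟩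

theorem SmulIdFactorsThrough.mul_left {P : Set C} {X : C} {a : A}
    (h : SmulIdFactorsThrough P X a) (c : A) : SmulIdFactorsThrough P X (c * a) := by
  obtain ⟨X₀, hX₀, f, g, hfg⟩ := h
  exact ⟨X₀, hX₀, c • f, g, by rw [Linear.smul_comp, hfg, smul_smul]⟩

theorem MemLeq.mono {I : Ideal A} {P Q : Set C} (hPQ : P ⊆ Q) {X : C} (h : MemLeq I P X) :
    MemLeq I Q X :=
  fun a ha => SmulIdFactorsThrough.mono hPQ (h a ha)

variable [HasBinaryBiproducts C]

theorem SmulIdFactorsThrough.add {P : Set C} (hsum : ∀ X Y : C, X ∈ P → Y ∈ P → (X ⊞ Y) ∈ P)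
    {X : C} {a b : A} (ha : SmulIdFactorsThrough P X a) (hb : SmulIdFactorsThrough P X b) :
    SmulIdFactorsThrough P X (a + b) := by
  obtain ⟨X₀, hX₀, f, g, hfg⟩ := ha
  obtain ⟨Y₀, hY₀, f', g', hfg'⟩ := hb
  exact ⟨X₀ ⊞ Y₀, hsum X₀ Y₀ hX₀ hY₀, biprod.lift f f', biprod.desc g g', by
    rw [biprod.lift_desc, hfg, hfg', add_smul]⟩

theorem memLeq_span {P : Set C} (hsum : ∀ X Y : C, X ∈ P → Y ∈ P → (X ⊞ Y) ∈ P) {X : C}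
    {s : Set A} (hzero : SmulIdFactorsThrough P X (0 : A)) (hs : ∀ a ∈ s, SmulIdFactorsThrough P X a) :
    MemLeq (Ideal.span s) P X :=
  (memLeq_iff_forall_smulIdFactorsThrough _ _ _).2 fun _ ha =>
    Submodule.span_induction (p := fun a _ => SmulIdFactorsThrough P X a) hs hzero
      (fun _ _ _ _ => SmulIdFactorsThrough.add hsum) (fun c _ _ h => h.mul_left c) ha

theorem exists_memLeq_of_memLeq_iUnion {ι : Type t} {P : ι → Set C}
    (hsum : ∀ i, ∀ X Y : C, X ∈ P i → Y ∈ P i → (X ⊞ Y) ∈ P i) (hP : Directed (· ⊆ ·) P)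
    {I : Ideal A} (hI : I.FG) {X : C} (h : MemLeq I (⋃ i, P i) X) : ∃ i, MemLeq I (P i) X := by
  classical
  obtain ⟨s, rfl⟩ := hI
  have hgen : ∀ a ∈ insert 0 s, ∃ i, SmulIdFactorsThrough (P i) X a := fun a ha =>
    (smulIdFactorsThrough_iUnion P X a).1 <| h a <| by
      rcases Finset.mem_insert.1 ha with rfl | ha
      exacts [Submodule.zero_mem _, Ideal.subset_span ha]
  have : Nonempty ι := (hgen 0 (Finset.mem_insert_self 0 s)).nonempty
  choose! idx hidx using hgen
  obtain ⟨γ, hγ⟩ := hP.finset_le ((insert 0 s).image idx)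
  have hfac : ∀ a ∈ insert 0 s, SmulIdFactorsThrough (P γ) X a := fun a ha =>
    (hidx a ha).mono (hγ _ (Finset.mem_image_of_mem idx ha))
  exact ⟨γ, memLeq_span (hsum γ) (hfac 0 (Finset.mem_insert_self 0 s))
    fun a ha => hfac a (Finset.mem_insert_of_mem ha)⟩

end

theorem stmt6_general {A : Type w} [CommRing A] {C : Type u} [Category.{v} C] [Preadditive C]
    [CategoryTheory.Linear A C] [HasBinaryBiproducts C]
    (I : Ideal A) (hI : I.FG) {ι : Type t} (P : ι → Set C)
    (hsum : ∀ α, ∀ X Y : C, X ∈ P α → Y ∈ P α → (X ⊞ Y) ∈ P α)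
    (hfiltered : ∀ α β : ι, ∃ γ : ι, P α ⊆ P γ ∧ P β ⊆ P γ)
    (X : C) :
    MemLeq I (⋃ α, P α) X ↔ ∃ α, MemLeq I (P α) X :=
  ⟨exists_memLeq_of_memLeq_iUnion hsum hfiltered hI,
    fun ⟨α, hα⟩ => hα.mono (Set.subset_iUnion P α)⟩

/-- Corollary 2.8: if `P` is the union of a filtered family of full subcategories `P_α`, each
closed under finite direct sums and retracts, and `I` is finitely generated, then
`P_{≤I} = ⋃_α (P_α)_{≤I}`. -/
theorem stmt6 {A : Type w} [CommRing A] {C : Type u} [Category.{v} C] [Preadditive C]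
    [CategoryTheory.Linear A C] [HasFiniteBiproducts C] [HasBinaryBiproducts C]
    (I : Ideal A) (hI : I.FG) {ι : Type t} (P : ι → Set C)
    (hzero : ∀ α, ∀ X : C, IsZero X → X ∈ P α)
    (hsum : ∀ α, ∀ X Y : C, X ∈ P α → Y ∈ P α → (X ⊞ Y) ∈ P α)
    (hretract : ∀ α, ∀ (X Y : C) (i : X ⟶ Y) (r : Y ⟶ X), i ≫ r = 𝟙 X → Y ∈ P α → X ∈ P α)
    (hfiltered : ∀ α β : ι, ∃ γ : ι, P α ⊆ P γ ∧ P β ⊆ P γ)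
    (X : C) :
    MemLeq I (⋃ α, P α) X ↔ ∃ α, MemLeq I (P α) X :=
  stmt6_general I hI P hsum hfiltered X
end

section
/- Let A be a commutative ring, C an A-linear additive category, and I ⊆ A an ideal. A morphism f : X → Y in C is a ≤I-isogeny if and only if for every a ∈ I there exists a morphism g_a : Y → X such that f ∘ g_a = a · id_Y and g_a ∘ f = a · id_X. -/
open CategoryTheory

universe v u w

namespace CategoryTheory.Linear

variable {A : Type w} [Semiring A] {C : Type u} [Category.{v} C] [Preadditive C] [Linear A C]
  {X Y : C} (f : X ⟶ Y) (a : A)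

theorem exists_smul_inverse_of_factors_through_iso {X₀ Y₀ : C} (u : X₀ ≅ Y₀)
    {p : X ⟶ X₀} {q : Y ⟶ Y₀} {p' : X₀ ⟶ X} {q' : Y₀ ⟶ Y}
    (hp : p ≫ u.hom = f ≫ q) (hq : u.hom ≫ q' = p' ≫ f)
    (hpp' : p ≫ p' = a • 𝟙 X) (hqq' : q ≫ q' = a • 𝟙 Y) :
    ∃ g : Y ⟶ X, g ≫ f = a • 𝟙 Y ∧ f ≫ g = a • 𝟙 X := by
  refine ⟨q ≫ u.inv ≫ p', ?_, ?_⟩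
  · rw [Category.assoc, Category.assoc, ← hq, Iso.inv_hom_id_assoc, hqq']
  · rw [← Category.assoc, ← hp, Category.assoc, Iso.hom_inv_id_assoc, hpp']

theorem factors_through_iso_iff_exists_smul_inverse :
    (∃ (X₀ Y₀ : C) (u : X₀ ≅ Y₀) (p : X ⟶ X₀) (q : Y ⟶ Y₀) (p' : X₀ ⟶ X) (q' : Y₀ ⟶ Y),
        p ≫ u.hom = f ≫ q ∧ u.hom ≫ q' = p' ≫ f ∧
        p ≫ p' = a • 𝟙 X ∧ q ≫ q' = a • 𝟙 Y) ↔
    ∃ g : Y ⟶ X, g ≫ f = a • 𝟙 Y ∧ f ≫ g = a • 𝟙 X := by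
  constructor
  · rintro ⟨X₀, Y₀, u, p, q, p', q', hp, hq, hpp', hqq'⟩
    exact exists_smul_inverse_of_factors_through_iso f a u hp hq hpp' hqq'
  · rintro ⟨g, hgf, hfg⟩
    refine ⟨X, X, Iso.refl X, a • 𝟙 X, g, 𝟙 X, f, ?_, ?_, ?_, hgf⟩ <;> simp [hfg]

end CategoryTheory.Linear

/-- Proposition 2.13 together with Remark 2.14: in an `A`-linear additive (1-)category, a
morphism `f : X → Y` is a `≤I`-isogeny (in the sense of the arrow category, i.e. for every
`a ∈ I` it admits a two-sided factorization through an isomorphism with composites `a • id`)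
if and only if for every `a ∈ I` there is `g_a : Y → X` with `f ∘ g_a = a • id_Y` and
`g_a ∘ f = a • id_X`. -/
theorem stmt7 {A : Type w} [CommRing A] {C : Type u} [Category.{v} C] [Preadditive C]
    [CategoryTheory.Linear A C] (I : Ideal A) {X Y : C} (f : X ⟶ Y) :
    (∀ a ∈ I, ∃ (X₀ Y₀ : C) (u : X₀ ≅ Y₀) (p : X ⟶ X₀) (q : Y ⟶ Y₀)
      (p' : X₀ ⟶ X) (q' : Y₀ ⟶ Y),
        p ≫ u.hom = f ≫ q ∧ u.hom ≫ q' = p' ≫ f ∧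
        p ≫ p' = a • 𝟙 X ∧ q ≫ q' = a • 𝟙 Y) ↔
    (∀ a ∈ I, ∃ g : Y ⟶ X, g ≫ f = a • 𝟙 Y ∧ f ≫ g = a • 𝟙 X) :=
  forall₂_congr fun a _ => Linear.factors_through_iso_iff_exists_smul_inverse f a
end

section
/- Let A be a commutative ring, C an A-linear additive category, and let P, Q be full subcategories of C closed under finite direct sums and retracts. Let I, J ⊆ A be ideals. Let W denote the full subcategory of the arrow category Fun(Δ¹, C) consisting of arrows X → Y with X in P and Y in Q. Then every arrow X' → Y' in Fun(Δ¹, C) with X' in P_{≤I} and Y' in Q_{≤J} belongs to W_{≤IJ}. -/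
/-!
If `i • 𝟙 X' = f ≫ g` through `X₀ ∈ P` and `j • 𝟙 Y' = u ≫ v` through `Y₀ ∈ Q`, then the arrow
`g ≫ h' ≫ u : X₀ ⟶ Y₀` receives the square `(f, i • u)` from `h'` and maps back to it by
`(j • g, v)`, with composite `(i * j) • 𝟙 h'`. A general element of `I * J` is a finite sum of
such products, and the scalars `a` for which `a • 𝟙 h'` factors through `W` are closed under
addition, by taking biproducts of arrows.
-/

open CategoryTheory CategoryTheory.Limits

universe v u w

namespace CategoryTheory

variable {A : Type w} [CommRing A] {C : Type u} [Category.{v} C] [Preadditive C]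
  [Linear A C]

def SmulFactorsThrough (P : Set C) (a : A) (X : C) : Prop :=
  ∃ X₀ ∈ P, ∃ (f : X ⟶ X₀) (g : X₀ ⟶ X), f ≫ g = a • 𝟙 X

/-- `a • 𝟙 h` factors, in the arrow category, through an arrow with source in `P` and
target in `Q`. -/
def ArrowSmulFactorsThrough (P Q : Set C) (a : A) {X Y : C} (h : X ⟶ Y) : Prop :=
  ∃ (X₀ Y₀ : C) (h₀ : X₀ ⟶ Y₀), X₀ ∈ P ∧ Y₀ ∈ Q ∧
    ∃ (f₁ : X ⟶ X₀) (f₂ : Y ⟶ Y₀) (g₁ : X₀ ⟶ X) (g₂ : Y₀ ⟶ Y),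
      f₁ ≫ h₀ = h ≫ f₂ ∧ g₁ ≫ h = h₀ ≫ g₂ ∧ f₁ ≫ g₁ = a • 𝟙 X ∧ f₂ ≫ g₂ = a • 𝟙 Y

theorem ArrowSmulFactorsThrough.of_mul {P Q : Set C} {i j : A} {X Y : C} (h : X ⟶ Y)
    (hX : SmulFactorsThrough P i X) (hY : SmulFactorsThrough Q j Y) :
    ArrowSmulFactorsThrough P Q (i * j) h := by
  obtain ⟨X₀, hX₀, f, g, hfg⟩ := hX
  obtain ⟨Y₀, hY₀, u, v, huv⟩ := hY
  refine ⟨X₀, Y₀, g ≫ h ≫ u, hX₀, hY₀, f, i • u, j • g, v, ?_, ?_, ?_, ?_⟩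
  · simp [← Category.assoc, hfg]
  · simp [Category.assoc, huv]
  · rw [Linear.comp_smul, hfg, smul_smul, mul_comm]
  · rw [Linear.smul_comp, huv, smul_smul]

theorem ArrowSmulFactorsThrough.add [HasBinaryBiproducts C] {P Q : Set C}
    (hsumP : ∀ X Y : C, X ∈ P → Y ∈ P → (X ⊞ Y) ∈ P)
    (hsumQ : ∀ X Y : C, X ∈ Q → Y ∈ Q → (X ⊞ Y) ∈ Q)
    {a b : A} {X Y : C} {h : X ⟶ Y}
    (ha : ArrowSmulFactorsThrough P Q a h) (hb : ArrowSmulFactorsThrough P Q b h) :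
    ArrowSmulFactorsThrough P Q (a + b) h := by
  obtain ⟨Xa, Ya, ha₀, hXa, hYa, f₁a, f₂a, g₁a, g₂a, sq₁a, sq₂a, hfga, huva⟩ := ha
  obtain ⟨Xb, Yb, hb₀, hXb, hYb, f₁b, f₂b, g₁b, g₂b, sq₁b, sq₂b, hfgb, huvb⟩ := hb
  refine ⟨Xa ⊞ Xb, Ya ⊞ Yb, biprod.map ha₀ hb₀, hsumP _ _ hXa hXb, hsumQ _ _ hYa hYb,
    biprod.lift f₁a f₁b, biprod.lift f₂a f₂b, biprod.desc g₁a g₁b, biprod.desc g₂a g₂b,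
    ?_, ?_, ?_, ?_⟩
  · ext <;> simp [sq₁a, sq₁b]
  · ext <;> simp [sq₂a, sq₂b]
  · simp [biprod.lift_desc, hfga, hfgb, add_smul]
  · simp [biprod.lift_desc, huva, huvb, add_smul]

end CategoryTheory

theorem stmt9_general {A : Type w} [CommRing A] {C : Type u} [Category.{v} C] [Preadditive C]
    [CategoryTheory.Linear A C] [HasBinaryBiproducts C]
    (I J : Ideal A) (P Q : Set C)
    (hsumP : ∀ X Y : C, X ∈ P → Y ∈ P → (X ⊞ Y) ∈ P)
    (hsumQ : ∀ X Y : C, X ∈ Q → Y ∈ Q → (X ⊞ Y) ∈ Q)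
    {X' Y' : C} (h' : X' ⟶ Y')
    (hX : MemLeq I P X') (hY : MemLeq J Q Y') :
    ∀ a ∈ I * J, ∃ (X₀ Y₀ : C) (h₀ : X₀ ⟶ Y₀), X₀ ∈ P ∧ Y₀ ∈ Q ∧
      ∃ (f₁ : X' ⟶ X₀) (f₂ : Y' ⟶ Y₀) (g₁ : X₀ ⟶ X') (g₂ : Y₀ ⟶ Y'),
        f₁ ≫ h₀ = h' ≫ f₂ ∧ g₁ ≫ h' = h₀ ≫ g₂ ∧
        f₁ ≫ g₁ = a • 𝟙 X' ∧ f₂ ≫ g₂ = a • 𝟙 Y' := fun _ ha =>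
  Submodule.mul_induction_on (C := fun a => ArrowSmulFactorsThrough P Q a h') ha
    (fun i hi j hj => .of_mul h' (hX i hi) (hY j hj))
    (fun _ _ => .add hsumP hsumQ)

/-- Proposition 2.17: if `P, Q ⊆ C` are full subcategories closed under finite direct sums and
retracts, `I, J ⊆ A` are ideals, and `W` is the subcategory of the arrow category consisting
of arrows with source in `P` and target in `Q`, then any arrow `h' : X' → Y'` with
`X' ∈ P_{≤I}` and `Y' ∈ Q_{≤J}` belongs to `W_{≤IJ}`: for every `a ∈ I*J` there are an arrow
`h₀ : X₀ → Y₀` with `X₀ ∈ P`, `Y₀ ∈ Q` and morphisms of arrows `(f₁,f₂) : h' → h₀` and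
`(g₁,g₂) : h₀ → h'` whose composite is `a • id` in the arrow category. -/
theorem stmt9 {A : Type w} [CommRing A] {C : Type u} [Category.{v} C] [Preadditive C]
    [CategoryTheory.Linear A C] [HasFiniteBiproducts C] [HasBinaryBiproducts C]
    (I J : Ideal A) (P Q : Set C)
    (hzeroP : ∀ X : C, IsZero X → X ∈ P)
    (hsumP : ∀ X Y : C, X ∈ P → Y ∈ P → (X ⊞ Y) ∈ P)
    (hretractP : ∀ (X Y : C) (i : X ⟶ Y) (r : Y ⟶ X), i ≫ r = 𝟙 X → Y ∈ P → X ∈ P)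
    (hzeroQ : ∀ X : C, IsZero X → X ∈ Q)
    (hsumQ : ∀ X Y : C, X ∈ Q → Y ∈ Q → (X ⊞ Y) ∈ Q)
    (hretractQ : ∀ (X Y : C) (i : X ⟶ Y) (r : Y ⟶ X), i ≫ r = 𝟙 X → Y ∈ Q → X ∈ Q)
    {X' Y' : C} (h' : X' ⟶ Y')
    (hX : MemLeq I P X') (hY : MemLeq J Q Y') :
    ∀ a ∈ I * J, ∃ (X₀ Y₀ : C) (h₀ : X₀ ⟶ Y₀), X₀ ∈ P ∧ Y₀ ∈ Q ∧
      ∃ (f₁ : X' ⟶ X₀) (f₂ : Y' ⟶ Y₀) (g₁ : X₀ ⟶ X') (g₂ : Y₀ ⟶ Y'),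
        f₁ ≫ h₀ = h' ≫ f₂ ∧ g₁ ≫ h' = h₀ ≫ g₂ ∧
        f₁ ≫ g₁ = a • 𝟙 X' ∧ f₂ ≫ g₂ = a • 𝟙 Y' :=
  stmt9_general I J P Q hsumP hsumQ h' hX hY
end

section
/- Let A be a commutative ring, I ⊆ A a finitely generated ideal, and M an A-module. Then M is ≤I-finitely generated if and only if there exist a finitely generated A-module N and a ≤I-isogeny u : N → M, i.e. an A-linear map u such that for every a ∈ I there exists v_a : M → N with u ∘ v_a = a · id_M and v_a ∘ u = a · id_N. -/
/-!
If `a • id_M` factors through finitely generated modules for each generator `a` of `I`, the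
images of the factorizations span a finitely generated submodule `N ⊆ M` with `a • M ⊆ N` for
every generator, hence for every `a ∈ I`, since the colon `N : M` is an ideal. The inclusion
`N → M` is then the `≤I`-isogeny: `a • id_M` corestricts to `v_a : M → N`, and `v_a ∘ u = a • id_N`
follows from `u ∘ v_a = a • id_M` because `u` is injective.
-/

universe u v

/-- An `A`-module `M` is `≤J`-finitely generated if for every `a ∈ J` there are a finitely
generated module `F` and maps `f : M → F`, `g : F → M` with `g ∘ f = a • id`. -/
def IsLeqFinitelyGenerated {A : Type u} [CommRing A] (J : Ideal A) (M : Type v)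
    [AddCommGroup M] [Module A M] : Prop :=
  ∀ a ∈ J, ∃ (F : Type v) (_ : AddCommGroup F) (_ : Module A F), Module.Finite A F ∧
    ∃ (f : M →ₗ[A] F) (g : F →ₗ[A] M), g ∘ₗ f = a • (LinearMap.id : M →ₗ[A] M)

open Submodule

theorem LinearMap.comp_eq_smul_id_of_injective {R M N : Type*} [CommSemiring R]
    [AddCommMonoid M] [Module R M] [AddCommMonoid N] [Module R N]
    {u : N →ₗ[R] M} (hu : Function.Injective u) {w : M →ₗ[R] N} {a : R}
    (h : u ∘ₗ w = a • LinearMap.id) : w ∘ₗ u = a • LinearMap.id := by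
  ext x
  apply hu
  simpa using LinearMap.congr_fun h (u x)

theorem Submodule.exists_subtype_comp_eq_smul_id_iff {R M : Type*} [CommSemiring R]
    [AddCommMonoid M] [Module R M] {N : Submodule R M} {a : R} :
    (∃ w : M →ₗ[R] N, N.subtype ∘ₗ w = a • LinearMap.id) ↔ a ∈ N.colon Set.univ := by
  constructor
  · rintro ⟨w, hw⟩
    refine mem_colon.2 fun m _ => ?_
    have hwm : (w m : M) = a • m := LinearMap.congr_fun hw m
    exact hwm ▸ (w m).2
  · intro ha
    exact ⟨(a • LinearMap.id).codRestrict N fun m => mem_colon.1 ha m trivial, rfl⟩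

theorem IsLeqFinitelyGenerated.exists_fg_mem_colon {A : Type u} [CommRing A] {J : Ideal A}
    {M : Type v} [AddCommGroup M] [Module A M] (h : IsLeqFinitelyGenerated J M) {a : A}
    (ha : a ∈ J) : ∃ N : Submodule A M, N.FG ∧ a ∈ N.colon Set.univ := by
  obtain ⟨F, _, _, _, f, g, hgf⟩ := h a ha
  refine ⟨LinearMap.range g, Module.Finite.iff_fg.1 inferInstance,
    exists_subtype_comp_eq_smul_id_iff.1 ⟨g.rangeRestrict ∘ₗ f, ?_⟩⟩
  rw [← hgf]
  rfl

theorem IsLeqFinitelyGenerated.exists_fg_le_colon {A : Type u} [CommRing A] {I : Ideal A}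
    (hI : I.FG) {M : Type v} [AddCommGroup M] [Module A M] (h : IsLeqFinitelyGenerated I M) :
    ∃ N : Submodule A M, N.FG ∧ I ≤ N.colon Set.univ := by
  obtain ⟨S, rfl⟩ := hI
  choose N hN hmem using fun s : S => h.exists_fg_mem_colon (Ideal.subset_span s.2)
  refine ⟨⨆ s, N s, fg_iSup N hN, Ideal.span_le.2 fun s hs => ?_⟩
  exact colon_mono (le_iSup N ⟨s, hs⟩) subset_rfl (hmem ⟨s, hs⟩)

/-- The claim of Definition 2.20: for a finitely generated ideal `I`, an `A`-module `M` is
`≤I`-finitely generated if and only if it is `≤I`-isogenous to a finitely generated module,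
i.e. there are a finitely generated module `N` and a map `u : N → M` such that for every
`a ∈ I` there is `v_a : M → N` with `u ∘ v_a = a • id_M` and `v_a ∘ u = a • id_N`. -/
theorem stmt11 {A : Type u} [CommRing A] (I : Ideal A) (hI : I.FG)
    (M : Type v) [AddCommGroup M] [Module A M] :
    IsLeqFinitelyGenerated I M ↔
      ∃ (N : Type v) (_ : AddCommGroup N) (_ : Module A N), Module.Finite A N ∧
        ∃ u : N →ₗ[A] M, ∀ a ∈ I, ∃ v : M →ₗ[A] N,
          u ∘ₗ v = a • (LinearMap.id : M →ₗ[A] M) ∧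
          v ∘ₗ u = a • (LinearMap.id : N →ₗ[A] N) := by
  constructor
  · intro h
    obtain ⟨N, hN, hIN⟩ := h.exists_fg_le_colon hI
    refine ⟨N, inferInstance, inferInstance, Module.Finite.iff_fg.2 hN, N.subtype, fun a ha => ?_⟩
    obtain ⟨w, hw⟩ := exists_subtype_comp_eq_smul_id_iff.2 (hIN ha)
    exact ⟨w, hw, LinearMap.comp_eq_smul_id_of_injective N.injective_subtype hw⟩
  · rintro ⟨N, _, _, hN, u, hu⟩ a ha
    obtain ⟨w, hw, -⟩ := hu a ha
    exact ⟨N, inferInstance, inferInstance, hN, w, u, hw⟩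
end
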